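/- arXiv:2605.19582 — 7 statements merged into one kernel-verified Lean document; each statement's English description precedes it below -/
import Mathlib

section
/- Let a = (a₁,a₂) ∈ ℤ², b ∈ ℕ with gcd(a₁,a₂,b) = 1, and β = (β₁,β₂) ∈ ℝ². Then for all 0 < ε < 1, the number of integers h with 0 ≤ h ≤ b−1 such that ‖h·(a/b) + β‖ < ε (where ‖·‖ is the max-norm distance to the nearest integer vector in ℝ²) is at most 8εb + 1. -/
/-!
Fix a coordinate and put `t(h) = h a - b · round (h a / b + β)`. It is a multiple of
`g = gcd (a, b)`, and on the Bohr set `{h < b | ‖h a / b + β‖ < ε}` it varies by less than `2εb`.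
If `g < 2εb`, the Bohr set is at most `2εb + g < 4εb` large: `t / g` takes fewer than
`2εb / g + 1` values there, and the solutions `h < b` of `t(h) = v` are congruent modulo `b / g`,
so there are at most `g` of them. If `g ≥ 2εb` in both coordinates, `t` is constant on the
Bohr set, so `b ∣ (h - h') aᵢ` for `i = 1, 2`; as `gcd (a₁, a₂, b) = 1` this forces `h = h'`.
-/

/-- Maximum-norm distance from a point of `ℝ × ℝ` to the nearest integer vector. -/
noncomputable def nint2 (x : ℝ × ℝ) : ℝ := max |x.1 - round x.1| |x.2 - round x.2|

open Finset

theorem Finset.card_le_of_forall_modEq {m n : ℕ} {s : Finset ℕ} (hs : s ⊆ range (m * n))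
    (hmod : ∀ x ∈ s, ∀ y ∈ s, x ≡ y [MOD n]) : #s ≤ m := by
  simpa using card_le_card_of_injOn (t := range m) (· / n)
    (fun x hx => mem_range.2 (Nat.div_lt_of_lt_mul (mul_comm m n ▸ mem_range.1 (hs hx))))
    (fun x hx y hy hxy => by
      rw [← Nat.div_add_mod x n, ← Nat.div_add_mod y n, show x / n = y / n from hxy,
        hmod x hx y hy])

theorem Finset.card_le_of_abs_sub_lt {s : Finset ℤ} {d : ℝ} (hd : 0 ≤ d)
    (hs : ∀ x ∈ s, ∀ y ∈ s, |((x - y : ℤ) : ℝ)| < d) : (#s : ℝ) ≤ d + 1 := by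
  rcases s.eq_empty_or_nonempty with rfl | hne
  · simp only [card_empty, Nat.cast_zero]; linarith
  have hsub : s ⊆ Icc (s.min' hne) (s.max' hne) :=
    fun x hx => mem_Icc.2 ⟨min'_le s x hx, le_max' s x hx⟩
  have hspread := (abs_lt.1 (hs _ (s.max'_mem hne) _ (s.min'_mem hne))).2
  have hcard : (#(Icc (s.min' hne) (s.max' hne)) : ℝ) = s.max' hne + 1 - s.min' hne := by
    rw [Int.card_Icc, ← Int.cast_natCast,
      Int.toNat_of_nonneg (by linarith [min'_le_max' s hne])]
    push_cast; ring
  push_cast at hspread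
  linarith [hcard ▸ (Nat.cast_le (α := ℝ)).2 (card_le_card hsub)]

theorem Int.ModEq.of_mul_right_of_gcd_gcd_eq_one {m x y c₁ c₂ : ℤ}
    (h₁ : x * c₁ ≡ y * c₁ [ZMOD m]) (h₂ : x * c₂ ≡ y * c₂ [ZMOD m])
    (hc : Int.gcd (Int.gcd c₁ c₂ : ℤ) m = 1) : x ≡ y [ZMOD m] := by
  rw [Int.modEq_iff_dvd] at *
  have hbezout : (y - x) * Int.gcd c₁ c₂
      = (y * c₁ - x * c₁) * c₁.gcdA c₂ + (y * c₂ - x * c₂) * c₁.gcdB c₂ := by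
    rw [Int.gcd_eq_gcd_ab]; ring
  refine Int.dvd_of_dvd_mul_left_of_gcd_one ?_ (by rwa [Int.gcd_comm])
  rw [hbezout]
  exact dvd_add (h₁.mul_right _) (h₂.mul_right _)

noncomputable def bohrSet (a : ℤ) (b : ℕ) (β ε : ℝ) : Finset ℕ :=
  {h ∈ range b | |(h : ℝ) * ((a : ℝ) / b) + β - round ((h : ℝ) * ((a : ℝ) / b) + β)| < ε}

noncomputable def orbitOffset (a : ℤ) (b : ℕ) (β : ℝ) (h : ℕ) : ℤ :=
  h * a - b * round ((h : ℝ) * ((a : ℝ) / b) + β)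

section orbitOffset

variable {a : ℤ} {b : ℕ} {β ε : ℝ} {h h' : ℕ}

theorem gcd_dvd_orbitOffset : (Int.gcd a b : ℤ) ∣ orbitOffset a b β h :=
  dvd_sub (dvd_mul_of_dvd_right (Int.gcd_dvd_left _ _) _)
    (dvd_mul_of_dvd_left (Int.gcd_dvd_right _ _) _)

theorem mul_modEq_of_orbitOffset_eq (heq : orbitOffset a b β h = orbitOffset a b β h') :
    h * a ≡ h' * a [ZMOD b] := by
  rw [Int.modEq_iff_dvd]
  refine ⟨round ((h' : ℝ) * ((a : ℝ) / b) + β) - round ((h : ℝ) * ((a : ℝ) / b) + β), ?_⟩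
  unfold orbitOffset at heq
  linear_combination -heq

theorem abs_orbitOffset_sub_lt (hb : 0 < b) (hh : h ∈ bohrSet a b β ε)
    (hh' : h' ∈ bohrSet a b β ε) :
    |((orbitOffset a b β h - orbitOffset a b β h' : ℤ) : ℝ)| < 2 * ε * b := by
  have hbR : (0 : ℝ) < b := by exact_mod_cast hb
  have hcast : ∀ k : ℕ, (orbitOffset a b β k : ℝ)
      = b * ((k : ℝ) * ((a : ℝ) / b) + β - round ((k : ℝ) * ((a : ℝ) / b) + β)) - b * β := by
    intro k
    simp only [orbitOffset, Int.cast_sub, Int.cast_mul, Int.cast_natCast]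
    field_simp
    ring
  simp only [bohrSet, mem_filter] at hh hh'
  rw [Int.cast_sub, hcast, hcast, sub_sub_sub_cancel_right, ← mul_sub, abs_mul, abs_of_pos hbR]
  calc _ < (b : ℝ) * (2 * ε) := mul_lt_mul_of_pos_left
          ((abs_sub _ _).trans_lt (by linarith [hh.2, hh'.2])) hbR
    _ = 2 * ε * b := by ring

theorem orbitOffset_eq_of_two_mul_le_gcd (hb : 0 < b) (hg : 2 * ε * b ≤ Int.gcd a b)
    (hh : h ∈ bohrSet a b β ε) (hh' : h' ∈ bohrSet a b β ε) :
    orbitOffset a b β h = orbitOffset a b β h' := by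
  rw [← sub_eq_zero]
  refine Int.eq_zero_of_abs_lt_dvd (dvd_sub gcd_dvd_orbitOffset gcd_dvd_orbitOffset) ?_
  exact_mod_cast (abs_orbitOffset_sub_lt hb hh hh').trans_le hg

theorem card_bohrSet_le (hb : 0 < b) (hε : 0 ≤ ε) :
    (#(bohrSet a b β ε) : ℝ) ≤ 2 * ε * b + Int.gcd a b := by
  set g := Int.gcd a b
  set n := b / g
  have hg : 0 < g := Int.gcd_pos_of_ne_zero_right _ (by exact_mod_cast hb.ne')
  have hgR : (0 : ℝ) < g := by exact_mod_cast hg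
  have hbgn : b = g * n :=
    (Nat.mul_div_cancel' (Int.natCast_dvd_natCast.1 (Int.gcd_dvd_right _ _))).symm
  set u : ℕ → ℤ := fun h => orbitOffset a b β h / g
  have hu : ∀ h, (g : ℤ) * u h = orbitOffset a b β h :=
    fun h => Int.mul_ediv_cancel' gcd_dvd_orbitOffset
  have hfiber : ∀ v ∈ (bohrSet a b β ε).image u, #{h ∈ bohrSet a b β ε | u h = v} ≤ g := by
    intro v _
    refine card_le_of_forall_modEq (n := n) (fun h hh => ?_) (fun h hh h' hh' => ?_)
    · exact hbgn ▸ (mem_filter.1 (mem_filter.1 hh).1).1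
    · have heq : orbitOffset a b β h = orbitOffset a b β h' := by
        rw [← hu, ← hu, (mem_filter.1 hh).2, (mem_filter.1 hh').2]
      have := (mul_modEq_of_orbitOffset_eq heq).cancel_right_div_gcd (by exact_mod_cast hb)
      rwa [Int.gcd_comm, ← Int.natCast_div, Int.natCast_modEq_iff] at this
  have himage : (#((bohrSet a b β ε).image u) : ℝ) ≤ 2 * ε * b / g + 1 := by
    refine card_le_of_abs_sub_lt (by positivity) ?_
    simp only [mem_image]
    rintro _ ⟨h, hh, rfl⟩ _ ⟨h', hh', rfl⟩
    have key := abs_orbitOffset_sub_lt hb hh hh'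
    rw [← hu h, ← hu h'] at key
    push_cast at key ⊢
    rw [← mul_sub, abs_mul, abs_of_pos hgR] at key
    rw [lt_div_iff₀ hgR]
    linarith
  calc (#(bohrSet a b β ε) : ℝ) ≤ g * #((bohrSet a b β ε).image u) := by
        exact_mod_cast card_le_mul_card_image _ g hfiber
    _ ≤ g * (2 * ε * b / g + 1) := by gcongr
    _ = 2 * ε * b + g := by field_simp

end orbitOffset

theorem card_inter_bohrSet_le_one {a₁ a₂ : ℤ} {b : ℕ} {β₁ β₂ ε : ℝ} (hb : 0 < b)
    (hgcd : Int.gcd (Int.gcd a₁ a₂ : ℤ) b = 1)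
    (h₁ : 2 * ε * b ≤ Int.gcd a₁ b) (h₂ : 2 * ε * b ≤ Int.gcd a₂ b) :
    #(bohrSet a₁ b β₁ ε ∩ bohrSet a₂ b β₂ ε) ≤ 1 := by
  refine card_le_one.2 fun h hh h' hh' => ?_
  rw [mem_inter] at hh hh'
  have hmod := Int.ModEq.of_mul_right_of_gcd_gcd_eq_one
    (mul_modEq_of_orbitOffset_eq (orbitOffset_eq_of_two_mul_le_gcd hb h₁ hh.1 hh'.1))
    (mul_modEq_of_orbitOffset_eq (orbitOffset_eq_of_two_mul_le_gcd hb h₂ hh.2 hh'.2)) hgcd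
  exact (Int.natCast_modEq_iff.1 hmod).eq_of_lt_of_lt
    (mem_range.1 (mem_filter.1 hh.1).1) (mem_range.1 (mem_filter.1 hh'.1).1)

theorem setOf_nint2_lt_eq_inter_bohrSet (a : ℤ × ℤ) {b : ℕ} (hb : 0 < b) (β : ℝ × ℝ) (ε : ℝ) :
    {h : ℕ | h ≤ b - 1 ∧
      nint2 ((h : ℝ) * ((a.1 : ℝ) / b) + β.1, (h : ℝ) * ((a.2 : ℝ) / b) + β.2) < ε}
      = ↑(bohrSet a.1 b β.1 ε ∩ bohrSet a.2 b β.2 ε) := by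
  ext h
  simp only [bohrSet, nint2, max_lt_iff, Set.mem_ofPred_eq, coe_inter, coe_filter,
    Set.mem_inter_iff, mem_range, show h ≤ b - 1 ↔ h < b by omega]
  tauto

theorem bohr_full_orbit_general (a : ℤ × ℤ) (b : ℕ) (hb : 0 < b)
    (hgcd : Int.gcd (Int.gcd a.1 a.2 : ℤ) (b : ℤ) = 1) (β : ℝ × ℝ)
    (ε : ℝ) (hε : 0 < ε) :
    (({h : ℕ | h ≤ b - 1 ∧
        nint2 ((h : ℝ) * ((a.1 : ℝ) / b) + β.1, (h : ℝ) * ((a.2 : ℝ) / b) + β.2) < ε}.ncard : ℝ))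
      ≤ 8 * ε * b + 1 := by
  rw [setOf_nint2_lt_eq_inter_bohrSet a hb, Set.ncard_coe_finset]
  have hεb : 0 ≤ ε * b := by positivity
  by_cases h₁ : 2 * ε * b ≤ Int.gcd a.1 b
  · by_cases h₂ : 2 * ε * b ≤ Int.gcd a.2 b
    · have hle : (#(bohrSet a.1 b β.1 ε ∩ bohrSet a.2 b β.2 ε) : ℝ) ≤ 1 := by
        exact_mod_cast card_inter_bohrSet_le_one hb hgcd h₁ h₂
      linarith
    · calc (#(bohrSet a.1 b β.1 ε ∩ bohrSet a.2 b β.2 ε) : ℝ) ≤ #(bohrSet a.2 b β.2 ε) := by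
            exact_mod_cast card_le_card inter_subset_right
        _ ≤ 2 * ε * b + Int.gcd a.2 b := card_bohrSet_le hb hε.le
        _ ≤ 8 * ε * b + 1 := by linarith
  · calc (#(bohrSet a.1 b β.1 ε ∩ bohrSet a.2 b β.2 ε) : ℝ) ≤ #(bohrSet a.1 b β.1 ε) := by
          exact_mod_cast card_le_card inter_subset_left
      _ ≤ 2 * ε * b + Int.gcd a.1 b := card_bohrSet_le hb hε.le
      _ ≤ 8 * ε * b + 1 := by linarith

theorem bohr_full_orbit (a : ℤ × ℤ) (b : ℕ) (hb : 0 < b)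
    (hgcd : Int.gcd (Int.gcd a.1 a.2 : ℤ) (b : ℤ) = 1) (β : ℝ × ℝ)
    (ε : ℝ) (hε : 0 < ε) (hε1 : ε < 1) :
    (({h : ℕ | h ≤ b - 1 ∧
        nint2 ((h : ℝ) * ((a.1 : ℝ) / b) + β.1, (h : ℝ) * ((a.2 : ℝ) / b) + β.2) < ε}.ncard : ℝ))
      ≤ 8 * ε * b + 1 :=
  bohr_full_orbit_general a b hb hgcd β ε hε
end

section
/- Let α = (α₁,α₂) ∈ ℝ² \ ℚ², β ∈ ℝ², and ε > 0. Then the number of integers m with 1 ≤ m < 1/‖α‖ such that ‖mα + β‖ < ε is at most 2ε/‖α‖ + 1. -/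
lemma round_eq_of_abs_lt_half (x : ℝ) (k : ℤ) (h : |x - k| < 1/2) : round x = k := by
  rw [abs_lt] at h
  rw [round_eq]
  exact Int.floor_eq_iff.mpr ⟨by push_cast; linarith [h.1], by push_cast; linarith [h.2]⟩

lemma core (δ c ε : ℝ) (hδ : 0 < δ) (hε : 0 < ε) (hε2 : ε < 1/2) :
    (({m : ℕ | 1 ≤ m ∧ (m:ℝ) < 1/δ ∧
        |(m:ℝ)*δ + c - round ((m:ℝ)*δ + c)| < ε}).ncard : ℝ) ≤ 2*ε/δ + 1 := by
  classical
  set n : ℕ → ℤ := fun m => round ((m:ℝ)*δ + c) with hn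
  set N : ℕ := ⌈1/δ⌉₊ with hN
  set T : Finset ℕ := (Finset.range N).filter
    (fun m => 1 ≤ m ∧ (m:ℝ) < 1/δ ∧ |(m:ℝ)*δ + c - round ((m:ℝ)*δ + c)| < ε) with hT
  have hset : {m : ℕ | 1 ≤ m ∧ (m:ℝ) < 1/δ ∧
      |(m:ℝ)*δ + c - round ((m:ℝ)*δ + c)| < ε} = ↑T := by
    ext m
    simp only [hT, Finset.coe_filter, Finset.mem_range, Set.mem_setOf_eq]
    constructor
    · intro h
      exact ⟨Nat.lt_ceil.mpr h.2.1, h⟩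
    · intro h
      exact h.2
  rw [hset, Set.ncard_coe_finset]
  have hmem : ∀ m ∈ T, 1 ≤ m ∧ (m:ℝ) < 1/δ ∧ |(m:ℝ)*δ + c - (n m : ℝ)| < ε := by
    intro m hm
    have := (Finset.mem_filter.mp hm).2
    exact this
  have key : ∀ m ∈ T, ∀ m' ∈ T, m ≤ m' →
      ((m':ℝ) - m)*δ - 2*ε < (n m' : ℝ) - n m ∧
        (n m' : ℝ) - n m < ((m':ℝ) - m)*δ + 2*ε := by
    intro m hm m' hm' _
    have h1 := (hmem m hm).2.2
    have h2 := (hmem m' hm').2.2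
    rw [abs_lt] at h1 h2
    constructor <;> nlinarith [h1.1, h1.2, h2.1, h2.2]
  have hmono : ∀ m ∈ T, ∀ m' ∈ T, m ≤ m' → n m ≤ n m' := by
    intro m hm m' hm' hle
    have h := (key m hm m' hm' hle).1
    have hmm : (m:ℝ) ≤ m' := by exact_mod_cast hle
    have hd : (0:ℝ) ≤ ((m':ℝ) - m) * δ := by nlinarith
    have h1 : (-1:ℝ) < (n m' : ℝ) - n m := by nlinarith
    have h2 : (-1:ℤ) < n m' - n m := by exact_mod_cast h1
    omega
  have hspan : ∀ m ∈ T, ∀ m' ∈ T, m ≤ m' → ((m':ℝ) - m)*δ < 1 - δ := by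
    intro m hm m' hm' hle
    have h1 : (1:ℝ) ≤ m := by exact_mod_cast (hmem m hm).1
    have h2 : (m':ℝ) < 1/δ := (hmem m' hm').2.1
    have h3 : (1/δ)*δ = 1 := by field_simp
    nlinarith [mul_lt_mul_of_pos_right (show (m':ℝ) - m < 1/δ - 1 by linarith) hδ]
  have hstep : ∀ m ∈ T, ∀ m' ∈ T, m ≤ m' → n m' ≤ n m + 1 := by
    intro m hm m' hm' hle
    have h := (key m hm m' hm' hle).2
    have h2 := hspan m hm m' hm' hle
    have h3 : (n m' : ℝ) - n m < 2 := by linarith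
    have h4 : (n m' : ℤ) - n m < 2 := by exact_mod_cast h3
    omega
  rcases Finset.eq_empty_or_nonempty T with hTe | hTne
  · rw [hTe]
    simp only [Finset.card_empty, Nat.cast_zero]
    positivity
  set a := T.min' hTne with ha
  set b := T.max' hTne with hb
  have haT : a ∈ T := T.min'_mem hTne
  have hbT : b ∈ T := T.max'_mem hTne
  have hab : a ≤ b := T.min'_le b hbT
  rcases eq_or_lt_of_le (hmono a haT b hbT hab) with hcase | hcase
  · -- all the same integer
    have hba : ((b:ℝ) - a)*δ < 2*ε := by
      have h := (key a haT b hbT hab).1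
      rw [← hcase] at h
      simp at h
      linarith
    have hcard : T.card ≤ b - a + 1 := by
      have hsub : T ⊆ Finset.Icc a b := fun m hm =>
        Finset.mem_Icc.mpr ⟨T.min'_le m hm, T.le_max' m hm⟩
      calc T.card ≤ (Finset.Icc a b).card := Finset.card_le_card hsub
      _ = b + 1 - a := Nat.card_Icc a b
      _ ≤ b - a + 1 := by omega
    have hcardR : (T.card : ℝ) ≤ (b:ℝ) - a + 1 := by
      have : ((b - a + 1 : ℕ) : ℝ) = (b:ℝ) - a + 1 := by
        push_cast [Nat.cast_sub hab]; ring
      rw [← this]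
      exact_mod_cast hcard
    have hba' : (b:ℝ) - a < 2*ε/δ := by
      rw [lt_div_iff₀ hδ]; linarith
    linarith
  · -- two integers
    have hnb : n b = n a + 1 := by
      have := hstep a haT b hbT hab
      omega
    set A := T.filter (fun m => n m = n a) with hA
    set B := T.filter (fun m => n m = n a + 1) with hB
    have hunion : T = A ∪ B := by
      ext m
      simp only [hA, hB, Finset.mem_union, Finset.mem_filter]
      constructor
      · intro hm
        have h1 := hmono a haT m hm (T.min'_le m hm)
        have h2 := hmono m hm b hbT (T.le_max' m hm)
        rw [hnb] at h2
        rcases eq_or_lt_of_le h1 with h | h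
        · exact Or.inl ⟨hm, h.symm⟩
        · exact Or.inr ⟨hm, by omega⟩
      · rintro (⟨h, -⟩ | ⟨h, -⟩) <;> exact h
    have hdisj : Disjoint A B := by
      rw [Finset.disjoint_left]
      intro m hmA hmB
      have h1 := (Finset.mem_filter.mp hmA).2
      have h2 := (Finset.mem_filter.mp hmB).2
      omega
    have hcardsum : T.card = A.card + B.card := by
      rw [hunion, Finset.card_union_of_disjoint hdisj]
    have hAne : A.Nonempty := ⟨a, Finset.mem_filter.mpr ⟨haT, rfl⟩⟩
    have hBne : B.Nonempty := ⟨b, Finset.mem_filter.mpr ⟨hbT, hnb⟩⟩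
    set a' := A.max' hAne with ha'
    set b' := B.min' hBne with hb'
    have ha'A : a' ∈ A := A.max'_mem hAne
    have hb'B : b' ∈ B := B.min'_mem hBne
    have ha'T : a' ∈ T := (Finset.mem_filter.mp ha'A).1
    have hb'T : b' ∈ T := (Finset.mem_filter.mp hb'B).1
    have hna' : n a' = n a := (Finset.mem_filter.mp ha'A).2
    have hnb' : n b' = n a + 1 := (Finset.mem_filter.mp hb'B).2
    have ha'b' : a' ≤ b' := by
      by_contra h
      push_neg at h
      have := hmono b' hb'T a' ha'T h.le
      omega
    have haa' : a ≤ a' := A.le_max' a (Finset.mem_filter.mpr ⟨haT, rfl⟩)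
    have hb'b : b' ≤ b := T.le_max' b' hb'T
    have hcardA : (A.card : ℝ) ≤ (a':ℝ) - a + 1 := by
      have hsub : A ⊆ Finset.Icc a a' := fun m hm =>
        Finset.mem_Icc.mpr ⟨T.min'_le m (Finset.mem_filter.mp hm).1, A.le_max' m hm⟩
      have h1 : A.card ≤ a' + 1 - a :=
        (Finset.card_le_card hsub).trans_eq (Nat.card_Icc a a')
      have h2 : ((a' + 1 - a : ℕ) : ℝ) = (a':ℝ) - a + 1 := by
        have : a ≤ a' + 1 := by omega
        push_cast [Nat.cast_sub this]; ring
      rw [← h2]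
      exact_mod_cast h1
    have hcardB : (B.card : ℝ) ≤ (b:ℝ) - b' + 1 := by
      have hsub : B ⊆ Finset.Icc b' b := fun m hm =>
        Finset.mem_Icc.mpr ⟨B.min'_le m hm, T.le_max' m (Finset.mem_filter.mp hm).1⟩
      have h1 : B.card ≤ b + 1 - b' :=
        (Finset.card_le_card hsub).trans_eq (Nat.card_Icc b' b)
      have h2 : ((b + 1 - b' : ℕ) : ℝ) = (b:ℝ) - b' + 1 := by
        have : b' ≤ b + 1 := by omega
        push_cast [Nat.cast_sub this]; ring
      rw [← h2]
      exact_mod_cast h1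
    have hgap : 1 - 2*ε < ((b':ℝ) - a')*δ := by
      have h := (key a' ha'T b' hb'T ha'b').2
      rw [hna', hnb'] at h
      push_cast at h
      linarith
    have hspanab : ((b:ℝ) - a)*δ < 1 - δ := hspan a haT b hbT hab
    have hba : (a ≤ b') := le_trans haa' ha'b'
    have hcast1 : (a:ℝ) ≤ a' := by exact_mod_cast haa'
    have hcast2 : (a':ℝ) ≤ b' := by exact_mod_cast ha'b'
    have hcast3 : (b':ℝ) ≤ b := by exact_mod_cast hb'b
    have hfinal : (T.card : ℝ) * δ < 2*ε + δ := by
      have hc : (T.card : ℝ) = A.card + B.card := by exact_mod_cast hcardsum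
      have hle : (T.card : ℝ) ≤ ((a':ℝ) - a) + ((b:ℝ) - b') + 2 := by
        rw [hc]; linarith
      nlinarith
    have heq : 2*ε/δ + 1 = (2*ε + δ)/δ := by field_simp
    rw [heq, le_div_iff₀ hδ]
    linarith

lemma core_finite (δ c ε : ℝ) (hδ : 0 < δ) :
    ({m : ℕ | 1 ≤ m ∧ (m:ℝ) < 1/δ ∧
        |(m:ℝ)*δ + c - round ((m:ℝ)*δ + c)| < ε}).Finite := by
  apply Set.Finite.subset (Set.finite_Iio ⌈1/δ⌉₊)
  intro m hm
  exact Nat.lt_ceil.mpr hm.2.1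

lemma aux (δ ε : ℝ) (hδ : 0 < δ) (hε : 0 < ε) (hε2 : ε < 1/2) (θ bb : ℝ)
    (hθ : |θ - round θ| = δ)
    (S : Set ℕ)
    (hS : ∀ m ∈ S, 1 ≤ m ∧ (m:ℝ) < 1/δ ∧
      |(m:ℝ)*θ + bb - round ((m:ℝ)*θ + bb)| < ε) :
    (S.ncard : ℝ) ≤ 2*ε/δ + 1 := by
  set η := θ - round θ with hη
  rcases le_or_gt 0 η with hs | hs
  · -- η = δ
    have hηδ : η = δ := by rw [← hθ, abs_of_nonneg hs]
    have hsub : S ⊆ {m : ℕ | 1 ≤ m ∧ (m:ℝ) < 1/δ ∧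
        |(m:ℝ)*δ + bb - round ((m:ℝ)*δ + bb)| < ε} := by
      intro m hm
      obtain ⟨h1, h2, h3⟩ := hS m hm
      refine ⟨h1, h2, ?_⟩
      set K : ℤ := round ((m:ℝ)*θ + bb) with hK
      have hk : |(m:ℝ)*δ + bb - ((K - m * round θ : ℤ) : ℝ)| < ε := by
        have : (m:ℝ)*δ + bb - ((K - m * round θ : ℤ) : ℝ) = (m:ℝ)*θ + bb - K := by
          push_cast
          rw [← hηδ, hη]
          ring
        rw [this]
        exact h3
      have hr : round ((m:ℝ)*δ + bb) = K - m * round θ :=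
        round_eq_of_abs_lt_half _ _ (hk.trans_le (by linarith))
      rw [hr]
      exact hk
    calc (S.ncard : ℝ) ≤ _ :=
          Nat.cast_le.mpr (Set.ncard_le_ncard hsub (core_finite δ bb ε hδ))
    _ ≤ 2*ε/δ + 1 := core δ bb ε hδ hε hε2
  · -- η = -δ
    have hηδ : η = -δ := by
      rw [← hθ, abs_of_neg hs]; ring
    have hsub : S ⊆ {m : ℕ | 1 ≤ m ∧ (m:ℝ) < 1/δ ∧
        |(m:ℝ)*δ + (-bb) - round ((m:ℝ)*δ + (-bb))| < ε} := by
      intro m hm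
      obtain ⟨h1, h2, h3⟩ := hS m hm
      refine ⟨h1, h2, ?_⟩
      set K : ℤ := round ((m:ℝ)*θ + bb) with hK
      have hk : |(m:ℝ)*δ + (-bb) - ((m * round θ - K : ℤ) : ℝ)| < ε := by
        have : (m:ℝ)*δ + (-bb) - ((m * round θ - K : ℤ) : ℝ)
            = -((m:ℝ)*θ + bb - K) := by
          push_cast
          have : δ = -η := by rw [hηδ]; ring
          rw [this, hη]
          ring
        rw [this, abs_neg]
        exact h3
      have hr : round ((m:ℝ)*δ + (-bb)) = m * round θ - K :=
        round_eq_of_abs_lt_half _ _ (hk.trans_le (by linarith))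
      rw [hr]
      exact hk
    calc (S.ncard : ℝ) ≤ _ :=
          Nat.cast_le.mpr (Set.ncard_le_ncard hsub (core_finite δ (-bb) ε hδ))
    _ ≤ 2*ε/δ + 1 := core δ (-bb) ε hδ hε hε2

theorem once_around (α β : ℝ × ℝ)
    (hα : ¬ ∃ p : ℚ × ℚ, ((p.1 : ℝ), (p.2 : ℝ)) = α) (ε : ℝ) (hε : 0 < ε) :
    (({m : ℕ | 1 ≤ m ∧ (m : ℝ) < 1 / nint2 α ∧
        nint2 ((m : ℝ) * α.1 + β.1, (m : ℝ) * α.2 + β.2) < ε}.ncard : ℝ))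
      ≤ 2 * ε / nint2 α + 1 := by
  classical
  set δ := nint2 α with hδdef
  have hδ0 : 0 ≤ δ := le_trans (abs_nonneg _) (le_max_left _ _)
  rcases eq_or_lt_of_le hδ0 with hδz | hδ
  · -- δ = 0 : set is empty
    have hempty : {m : ℕ | 1 ≤ m ∧ (m : ℝ) < 1 / δ ∧
        nint2 ((m : ℝ) * α.1 + β.1, (m : ℝ) * α.2 + β.2) < ε} = ∅ := by
      ext m
      simp only [Set.mem_setOf_eq, Set.mem_empty_iff_false, iff_false, not_and]
      intro _ h
      rw [← hδz, div_zero] at h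
      exact absurd h (not_lt.mpr (Nat.cast_nonneg m)).elim
    rw [hempty]
    simp only [Set.ncard_empty, Nat.cast_zero]
    positivity
  rcases lt_or_ge ε (1/2) with hhalf | hhalf
  · -- main case: use aux with the coordinate achieving the max
    rcases max_choice |α.1 - round α.1| |α.2 - round α.2| with hmax | hmax
    · apply aux δ ε hδ hε hhalf α.1 β.1
      · exact hmax.symm
      · intro m hm
        obtain ⟨h1, h2, h3⟩ := hm
        refine ⟨h1, h2, lt_of_le_of_lt ?_ h3⟩
        exact le_max_left _ _
    · apply aux δ ε hδ hε hhalf α.2 β.2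
      · exact hmax.symm
      · intro m hm
        obtain ⟨h1, h2, h3⟩ := hm
        refine ⟨h1, h2, lt_of_le_of_lt ?_ h3⟩
        exact le_max_right _ _
  · -- ε ≥ 1/2 : trivial bound by the number of integers in [1, 1/δ)
    set N : ℕ := ⌈1/δ⌉₊ with hN
    have hsub : {m : ℕ | 1 ≤ m ∧ (m : ℝ) < 1 / δ ∧
        nint2 ((m : ℝ) * α.1 + β.1, (m : ℝ) * α.2 + β.2) < ε} ⊆ ↑(Finset.Ico 1 N) := by
      intro m hm
      simp only [Finset.coe_Ico, Set.mem_Ico]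
      exact ⟨hm.1, Nat.lt_ceil.mpr hm.2.1⟩
    have h1 : ({m : ℕ | 1 ≤ m ∧ (m : ℝ) < 1 / δ ∧
        nint2 ((m : ℝ) * α.1 + β.1, (m : ℝ) * α.2 + β.2) < ε}.ncard : ℝ)
        ≤ ((Finset.Ico 1 N).card : ℝ) := by
      have := Set.ncard_le_ncard hsub (Finset.finite_toSet _)
      rw [Set.ncard_coe_finset] at this
      exact_mod_cast this
    have h2 : (Finset.Ico 1 N).card = N - 1 := by
      rw [Nat.card_Ico]
    rcases Nat.eq_zero_or_pos N with hNz | hNp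
    · rw [h2, hNz] at h1
      simp only [Nat.zero_sub, Nat.cast_zero] at h1
      have : (0:ℝ) ≤ 2 * ε / δ := by positivity
      linarith
    · have h3 : ((N - 1 : ℕ) : ℝ) = (N:ℝ) - 1 := by
        push_cast [Nat.cast_sub hNp]; ring
      have h4 : (N:ℝ) < 1/δ + 1 := Nat.ceil_lt_add_one (by positivity)
      have h5 : 1/δ ≤ 2*ε/δ := by
        gcongr
        linarith
      rw [h2, h3] at h1
      linarith
end

section
/- Let q be a positive integer, B a positive integer, and A = (A₁,A₂) ∈ ℤ² with gcd(A₁,A₂,B) = 1. Let S_q = {u ∈ (ℤ/qℤ)² : gcd(B u₁ + A₁, B u₂ + A₂, B q) = 1}. Then #S_q ≥ (6/π²) q², i.e., #S_q = q² ∏_{p | q, p ∤ B} (1 − 1/p²) ≥ (6/π²) q². -/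
/-!
A common prime factor of `B u₁ + A₁`, `B u₂ + A₂` and `B` would divide `A₁`, `A₂` and `B`, so the
condition only asks that `B u + A` be a unimodular pair modulo `q`, which depends on `u mod q`.
By the Chinese remainder theorem the number of such `u ∈ (ℤ/q)²` is multiplicative in `q`.
The ring `ℤ/pᵏ` is local, so a pair is unimodular iff one of its entries is a unit. If `p ∣ B`,
then `B u + A` is a unit entrywise exactly when `A` is, and one of `A₁, A₂` is a unit: every `u`
counts. If `p ∤ B`, then `u ↦ B u + A` is a bijection and exactly the `p^(2k-2)` pairs of
non-units are lost. Finally `∏_{p ∈ s} (1 - p⁻²)⁻¹` is the sum of `n⁻²` over the `n` whose prime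
factors lie in `s`, which is at most `ζ(2) = π²/6`.
-/

theorem Int.coprime_gcd_iff_isCoprime_zmod (a b : ℤ) (n : ℕ) :
    (Int.gcd a b).Coprime n ↔ IsCoprime (a : ZMod n) (b : ZMod n) := by
  have gcd_dvd {c : ℤ} (h : (Int.gcd a b : ℤ) ∣ c) : ((Int.gcd a b : ℕ) : ZMod n) ∣ c := by
    simpa using Int.cast_dvd_cast (α := ZMod n) _ _ h
  rw [← ZMod.isUnit_iff_coprime]
  refine ⟨fun hg ↦ ?_, fun h ↦
    h.isUnit_of_dvd' (gcd_dvd (Int.gcd_dvd_left a b)) (gcd_dvd (Int.gcd_dvd_right a b))⟩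
  obtain ⟨w, hw⟩ := hg.exists_left_inv
  have bezout := congrArg (Int.cast : ℤ → ZMod n) (Int.gcd_eq_gcd_ab a b)
  push_cast at bezout
  exact ⟨w * Int.gcdA a b, w * Int.gcdB a b, by linear_combination w * bezout.symm + hw⟩

theorem ncard_representatives_eq_ncard_zmod (q : ℕ) [NeZero q] {P : ℤ × ℤ → Prop}
    {S : Set (ZMod q × ZMod q)} (hPS : ∀ u : ℤ × ℤ, P u ↔ ((u.1 : ZMod q), (u.2 : ZMod q)) ∈ S) :
    {u : ℤ × ℤ | 0 ≤ u.1 ∧ u.1 < q ∧ 0 ≤ u.2 ∧ u.2 < q ∧ P u}.ncard = S.ncard := by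
  let rep : ZMod q × ZMod q → ℤ × ℤ := fun v ↦ ((v.1.val : ℤ), (v.2.val : ℤ))
  have rep_injective : rep.Injective := fun v w h ↦ by
    simp only [rep, Prod.mk.injEq, Nat.cast_inj] at h
    exact Prod.ext (ZMod.val_injective q h.1) (ZMod.val_injective q h.2)
  have val_cast {x : ℤ} (h0 : 0 ≤ x) (hq : x < q) : ((x : ZMod q).val : ℤ) = x := by
    rw [ZMod.val_intCast, Int.emod_eq_of_lt h0 hq]
  rw [← Set.ncard_image_of_injective _ rep_injective]
  congr 1
  ext u
  constructor
  · rintro ⟨hx0, hxq, hy0, hyq, hP⟩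
    exact ⟨(u.1, u.2), (hPS u).1 hP, by simp only [rep, val_cast hx0 hxq, val_cast hy0 hyq]⟩
  · rintro ⟨v, hv, rfl⟩
    have cast_rep : (((rep v).1 : ZMod q), ((rep v).2 : ZMod q)) = v := by simp [rep]
    refine ⟨by positivity, ?_, by positivity, ?_, (hPS _).2 (by rwa [cast_rep])⟩ <;>
      exact Nat.cast_lt.2 (ZMod.val_lt _)

theorem Prod.isCoprime_iff {R S : Type*} [CommSemiring R] [CommSemiring S] {x y : R × S} :
    IsCoprime x y ↔ IsCoprime x.1 y.1 ∧ IsCoprime x.2 y.2 := by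
  refine ⟨fun h ↦ ⟨h.map (RingHom.fst R S), h.map (RingHom.snd R S)⟩, ?_⟩
  rintro ⟨⟨a₁, b₁, h₁⟩, ⟨a₂, b₂, h₂⟩⟩
  exact ⟨(a₁, a₂), (b₁, b₂), Prod.ext h₁ h₂⟩

theorem RingEquiv.isCoprime_map_iff {R S : Type*} [CommSemiring R] [CommSemiring S]
    (e : R ≃+* S) {x y : R} : IsCoprime (e x) (e y) ↔ IsCoprime x y :=
  ⟨fun h ↦ by simpa using h.map e.symm.toRingHom, fun h ↦ h.map e.toRingHom⟩

theorem IsLocalRing.isCoprime_iff_isUnit_or_isUnit {R : Type*} [CommRing R] [IsLocalRing R]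
    {x y : R} : IsCoprime x y ↔ IsUnit x ∨ IsUnit y := by
  refine ⟨fun ⟨a, b, h⟩ ↦ ?_, ?_⟩
  · exact (isUnit_or_isUnit_of_add_one h).imp isUnit_of_mul_isUnit_right
      isUnit_of_mul_isUnit_right
  · rintro (⟨u, rfl⟩ | ⟨u, rfl⟩)
    · exact ⟨↑u⁻¹, 0, by simp⟩
    · exact ⟨0, ↑u⁻¹, by simp⟩

theorem ncard_nonunits_add_card_units (M : Type*) [Monoid M] [Finite M] :
    (nonunits M).ncard + Nat.card Mˣ = Nat.card M := by
  rw [add_comm, ← Set.ncard_range_of_injective Units.val_injective]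
  exact Set.ncard_add_ncard_compl _

section ShiftedCoprimePairs

variable (R : Type*) [CommRing R] (B : ℤ) (A : ℤ × ℤ)

def shiftedCoprimePairs : Set (R × R) :=
  {x | IsCoprime (B * x.1 + A.1 : R) (B * x.2 + A.2)}

variable {R} {S : Type*} [CommRing S]

theorem ncard_shiftedCoprimePairs_congr (e : R ≃+* S) :
    (shiftedCoprimePairs S B A).ncard = (shiftedCoprimePairs R B A).ncard := by
  have : shiftedCoprimePairs R B A = Prod.map e e ⁻¹' shiftedCoprimePairs S B A := by
    ext x
    simp [shiftedCoprimePairs, ← e.isCoprime_map_iff (x := _ + _)]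
  rw [this, Set.ncard_preimage_of_injective_subset_range (e.injective.prodMap e.injective)]
  exact fun y _ ↦ ⟨(e.symm y.1, e.symm y.2), by simp⟩

theorem ncard_shiftedCoprimePairs_prod :
    (shiftedCoprimePairs (R × S) B A).ncard =
      (shiftedCoprimePairs R B A).ncard * (shiftedCoprimePairs S B A).ncard := by
  let e := Equiv.prodProdProdComm R S R S
  have : shiftedCoprimePairs (R × S) B A =
      e ⁻¹' (shiftedCoprimePairs R B A ×ˢ shiftedCoprimePairs S B A) := by
    ext x
    simp [shiftedCoprimePairs, e, Prod.isCoprime_iff]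
  rw [this, Set.ncard_preimage_of_injective_subset_range e.injective (by simp), Set.ncard_prod]

theorem ncard_shiftedCoprimePairs_zmod_mul {m n : ℕ} (h : m.Coprime n) :
    (shiftedCoprimePairs (ZMod (m * n)) B A).ncard =
      (shiftedCoprimePairs (ZMod m) B A).ncard * (shiftedCoprimePairs (ZMod n) B A).ncard := by
  rw [← ncard_shiftedCoprimePairs_prod,
    ncard_shiftedCoprimePairs_congr B A (ZMod.chineseRemainder h)]

variable [IsLocalRing R]

theorem shiftedCoprimePairs_eq_univ (hB : ¬IsUnit (B : R))
    (hA : IsUnit (A.1 : R) ∨ IsUnit (A.2 : R)) : shiftedCoprimePairs R B A = Set.univ := by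
  have isUnit_shift (x : R) (a : ℤ) : IsUnit (B * x + a : R) ↔ IsUnit (a : R) := by
    simp only [← IsLocalRing.notMem_maximalIdeal]
    rw [Ideal.add_mem_iff_right _ (Ideal.mul_mem_right _ _ ((IsLocalRing.mem_maximalIdeal _).2 hB))]
  ext x
  simpa [shiftedCoprimePairs, IsLocalRing.isCoprime_iff_isUnit_or_isUnit, isUnit_shift] using hA

theorem ncard_shiftedCoprimePairs_add_ncard_nonunits_sq [Finite R] (hB : IsUnit (B : R)) :
    (shiftedCoprimePairs R B A).ncard + (nonunits R).ncard ^ 2 = Nat.card R ^ 2 := by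
  have ncard_preimage (a : ℤ) : ((fun x : R ↦ B * x + a) ⁻¹' nonunits R).ncard =
      (nonunits R).ncard := by
    refine Set.ncard_preimage_of_injective_subset_range
      ((add_left_injective _).comp hB.mul_right_injective) fun y _ ↦ ⟨↑hB.unit⁻¹ * (y - a), ?_⟩
    simp only [← mul_assoc, hB.mul_val_inv, one_mul, sub_add_cancel]
  have compl : (shiftedCoprimePairs R B A)ᶜ =
      ((fun x : R ↦ B * x + A.1) ⁻¹' nonunits R) ×ˢ ((fun x : R ↦ B * x + A.2) ⁻¹' nonunits R) := by
    ext x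
    simp [shiftedCoprimePairs, IsLocalRing.isCoprime_iff_isUnit_or_isUnit]
  rw [sq (Nat.card R), ← Nat.card_prod, ← Set.ncard_add_ncard_compl (shiftedCoprimePairs R B A),
    compl, Set.ncard_prod, ncard_preimage, ncard_preimage, sq]

end ShiftedCoprimePairs

theorem gcd_eq_one_iff_mem_shiftedCoprimePairs {B : ℕ} {A : ℤ × ℤ}
    (hA : Int.gcd (Int.gcd A.1 A.2 : ℤ) (B : ℤ) = 1) (q : ℕ) (u : ℤ × ℤ) :
    Int.gcd (Int.gcd ((B : ℤ) * u.1 + A.1) ((B : ℤ) * u.2 + A.2) : ℤ) ((B : ℤ) * q) = 1 ↔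
      ((u.1 : ZMod q), (u.2 : ZMod q)) ∈ shiftedCoprimePairs (ZMod q) B A := by
  rw [Int.gcd_natCast_natCast, ← Nat.coprime_iff_gcd_eq_one,
    Int.coprime_gcd_iff_isCoprime_zmod] at hA
  rw [shiftedCoprimePairs, Set.mem_ofPred_eq, ← Nat.cast_mul, Int.gcd_natCast_natCast,
    ← Nat.coprime_iff_gcd_eq_one, Nat.coprime_mul_iff_right, Int.coprime_gcd_iff_isCoprime_zmod,
    Int.coprime_gcd_iff_isCoprime_zmod]
  push_cast
  rw [ZMod.natCast_self]
  simp only [zero_mul, zero_add, hA, true_and]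

namespace ZMod

variable {p : ℕ} [Fact p.Prime]

instance isLocalRing_pow (k : ℕ) [NeZero k] : IsLocalRing (ZMod (p ^ k)) := by
  have : Fact (1 < p ^ k) := ⟨Nat.one_lt_pow (NeZero.ne k) (Fact.out : p.Prime).one_lt⟩
  refine IsLocalRing.of_nonunits_add fun a b ha hb ↦ ?_
  obtain ⟨m, rfl⟩ := natCast_zmod_surjective a
  obtain ⟨n, rfl⟩ := natCast_zmod_surjective b
  simp only [mem_nonunits_iff, ← Nat.cast_add,
    isUnit_natCast_iff_not_dvd_pow Fact.out (Nat.pos_of_neZero k), not_not] at *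
  exact dvd_add ha hb

theorem ncard_nonunits_pow_succ (k : ℕ) : (nonunits (ZMod (p ^ (k + 1)))).ncard = p ^ k := by
  have hp : p.Prime := Fact.out
  have h := ncard_nonunits_add_card_units (ZMod (p ^ (k + 1)))
  rw [Nat.card_eq_fintype_card, card_units_eq_totient, Nat.totient_prime_pow_succ hp,
    Nat.card_zmod] at h
  have : p ^ k * (p - 1) + p ^ k = p ^ (k + 1) := by
    rw [← mul_add_one, Nat.sub_add_cancel hp.one_le, pow_succ]
  omega

theorem isUnit_intCast_pow_succ_iff (k : ℕ) (n : ℤ) :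
    IsUnit (n : ZMod (p ^ (k + 1))) ↔ ¬(p : ℤ) ∣ n := by
  rw [coe_int_isUnit_iff_isCoprime, Nat.cast_pow, IsCoprime.pow_left_iff k.succ_pos,
    Prime.coprime_iff_not_dvd (Nat.prime_iff_prime_int.mp Fact.out)]

end ZMod

section Count

variable {B : ℤ} {A : ℤ × ℤ}

theorem ncard_shiftedCoprimePairs_zmod_pow_of_dvd {p : ℕ} [Fact p.Prime]
    (hA : Int.gcd (Int.gcd A.1 A.2) B = 1) (hpB : (p : ℤ) ∣ B) (k : ℕ) :
    (shiftedCoprimePairs (ZMod (p ^ (k + 1))) B A).ncard = (p ^ (k + 1)) ^ 2 := by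
  have hpA : ¬((p : ℤ) ∣ A.1 ∧ (p : ℤ) ∣ A.2) := by
    rintro ⟨h₁, h₂⟩
    have := Int.dvd_coe_gcd (Int.dvd_coe_gcd h₁ h₂) hpB
    rw [hA, Nat.cast_one, ← Nat.cast_one, Int.natCast_dvd_natCast] at this
    exact (Fact.out : p.Prime).not_dvd_one this
  rw [shiftedCoprimePairs_eq_univ, Set.ncard_univ, Nat.card_prod, Nat.card_zmod, sq]
  · simpa [ZMod.isUnit_intCast_pow_succ_iff] using hpB
  · simpa only [ZMod.isUnit_intCast_pow_succ_iff, ← not_and_or] using hpA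

theorem ncard_shiftedCoprimePairs_zmod_pow_add {p : ℕ} [Fact p.Prime] (hpB : ¬(p : ℤ) ∣ B)
    (k : ℕ) :
    (shiftedCoprimePairs (ZMod (p ^ (k + 1))) B A).ncard + (p ^ k) ^ 2 = (p ^ (k + 1)) ^ 2 := by
  have := ncard_shiftedCoprimePairs_add_ncard_nonunits_sq B A
    ((ZMod.isUnit_intCast_pow_succ_iff k B).2 hpB)
  rwa [ZMod.ncard_nonunits_pow_succ, Nat.card_zmod] at this

theorem ncard_shiftedCoprimePairs_zmod (hA : Int.gcd (Int.gcd A.1 A.2) B = 1) {q : ℕ}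
    (hq : q ≠ 0) : ((shiftedCoprimePairs (ZMod q) B A).ncard : ℝ) =
      q ^ 2 * ∏ p ∈ q.primeFactors.filter (fun p : ℕ ↦ ¬(p : ℤ) ∣ B), (1 - 1 / (p : ℝ) ^ 2) := by
  induction q using Nat.recOnPosPrimePosCoprime with
  | zero => contradiction
  | one =>
    have : shiftedCoprimePairs (ZMod 1) B A = Set.univ :=
      Set.eq_univ_of_forall fun _ ↦ ⟨0, 0, Subsingleton.elim _ _⟩
    simp [this]
  | prime_pow p n hp hn =>
    have : Fact p.Prime := ⟨hp⟩
    obtain ⟨k, rfl⟩ := Nat.exists_eq_add_one_of_ne_zero hn.ne'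
    rw [Nat.primeFactors_prime_pow (k.succ_ne_zero) hp, Finset.filter_singleton]
    split_ifs with hpB
    · rw [ncard_shiftedCoprimePairs_zmod_pow_of_dvd hA hpB]
      simp
    · have h : ((shiftedCoprimePairs (ZMod (p ^ (k + 1))) B A).ncard : ℝ) =
          ((p : ℝ) ^ (k + 1)) ^ 2 - ((p : ℝ) ^ k) ^ 2 := by
        rw [eq_sub_iff_add_eq]
        exact_mod_cast ncard_shiftedCoprimePairs_zmod_pow_add hpB k
      have hp0 : (p : ℝ) ≠ 0 := by exact_mod_cast hp.ne_zero
      rw [h, Finset.prod_singleton]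
      push_cast
      field_simp
      ring
  | coprime m n _ _ hmn ihm ihn =>
    rw [ncard_shiftedCoprimePairs_zmod_mul B A hmn, hmn.primeFactors_mul, Finset.filter_union,
      Finset.prod_union (Finset.disjoint_filter_filter hmn.disjoint_primeFactors)]
    push_cast [ihm (left_ne_zero_of_mul hq), ihn (right_ne_zero_of_mul hq)]
    ring

end Count

theorem six_div_pi_sq_le_prod_one_sub_inv_sq {s : Finset ℕ} (hs : ∀ p ∈ s, p.Prime) :
    6 / Real.pi ^ 2 ≤ ∏ p ∈ s, (1 - 1 / (p : ℝ) ^ 2) := by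
  let f : ℕ →* ℝ := invMonoidHom.comp ((powMonoidHom 2).comp (Nat.castRingHom ℝ : ℕ →* ℝ))
  have hf : ⇑f = fun n : ℕ ↦ 1 / (n : ℝ) ^ 2 := funext fun n ↦ by simp [f]
  have hsum : Summable f := hf ▸ hasSum_zeta_two.summable
  have euler := EulerProduct.prod_filter_prime_geometric_eq_tsum_factoredNumbers hsum s
  rw [Finset.filter_true_of_mem hs] at euler
  have hpos : 0 < ∏ p ∈ s, (1 - 1 / (p : ℝ) ^ 2) := Finset.prod_pos fun p hp ↦ by
    have : (2 : ℝ) ≤ p := by exact_mod_cast (hs p hp).two_le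
    rw [sub_pos, div_lt_one (by positivity)]
    nlinarith
  have : (∏ p ∈ s, (1 - 1 / (p : ℝ) ^ 2))⁻¹ ≤ Real.pi ^ 2 / 6 := calc
    _ = ∏ p ∈ s, (1 - f p)⁻¹ := by simp only [hf, Finset.prod_inv_distrib]
    _ = ∑' m : Nat.factoredNumbers s, f m := euler
    _ ≤ ∑' n, f n := Summable.tsum_subtype_le _ _ (fun n ↦ by simp only [hf]; positivity) hsum
    _ = Real.pi ^ 2 / 6 := by simpa only [hf] using hasSum_zeta_two.tsum_eq
  rwa [inv_le_comm₀ hpos (by positivity), inv_div] at this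

theorem shift_reduced_count_general (q B : ℕ) (hq : 0 < q) (A : ℤ × ℤ)
    (hgcd : Int.gcd (Int.gcd A.1 A.2 : ℤ) (B : ℤ) = 1) :
    (({u : ℤ × ℤ | 0 ≤ u.1 ∧ u.1 < q ∧ 0 ≤ u.2 ∧ u.2 < q ∧
        Int.gcd (Int.gcd ((B : ℤ) * u.1 + A.1) ((B : ℤ) * u.2 + A.2) : ℤ)
          ((B : ℤ) * q) = 1}.ncard : ℝ))
      = (q : ℝ) ^ 2 * ∏ p ∈ q.primeFactors.filter (fun p => ¬ p ∣ B), (1 - 1 / (p : ℝ) ^ 2) ∧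
    (6 / Real.pi ^ 2) * (q : ℝ) ^ 2
      ≤ (({u : ℤ × ℤ | 0 ≤ u.1 ∧ u.1 < q ∧ 0 ≤ u.2 ∧ u.2 < q ∧
        Int.gcd (Int.gcd ((B : ℤ) * u.1 + A.1) ((B : ℤ) * u.2 + A.2) : ℤ)
          ((B : ℤ) * q) = 1}.ncard : ℝ)) := by
  have : NeZero q := ⟨hq.ne'⟩
  have formula := ncard_shiftedCoprimePairs_zmod hgcd hq.ne'
  simp only [Int.natCast_dvd_natCast] at formula
  rw [ncard_representatives_eq_ncard_zmod q (gcd_eq_one_iff_mem_shiftedCoprimePairs hgcd q),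
    formula, mul_comm]
  refine ⟨rfl, mul_le_mul_of_nonneg_right (six_div_pi_sq_le_prod_one_sub_inv_sq fun p hp ↦ ?_)
    (by positivity)⟩
  exact Nat.prime_of_mem_primeFactors (Finset.mem_filter.mp hp).1

theorem shift_reduced_count (q B : ℕ) (hq : 0 < q) (hB : 0 < B) (A : ℤ × ℤ)
    (hgcd : Int.gcd (Int.gcd A.1 A.2 : ℤ) (B : ℤ) = 1) :
    (({u : ℤ × ℤ | 0 ≤ u.1 ∧ u.1 < q ∧ 0 ≤ u.2 ∧ u.2 < q ∧
        Int.gcd (Int.gcd ((B : ℤ) * u.1 + A.1) ((B : ℤ) * u.2 + A.2) : ℤ)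
          ((B : ℤ) * q) = 1}.ncard : ℝ))
      = (q : ℝ) ^ 2 * ∏ p ∈ q.primeFactors.filter (fun p => ¬ p ∣ B), (1 - 1 / (p : ℝ) ^ 2) ∧
    (6 / Real.pi ^ 2) * (q : ℝ) ^ 2
      ≤ (({u : ℤ × ℤ | 0 ≤ u.1 ∧ u.1 < q ∧ 0 ≤ u.2 ∧ u.2 < q ∧
        Int.gcd (Int.gcd ((B : ℤ) * u.1 + A.1) ((B : ℤ) * u.2 + A.2) : ℤ)
          ((B : ℤ) * q) = 1}.ncard : ℝ)) :=
  shift_reduced_count_general q B hq A hgcd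
end

section
/- Let γ ∈ ℝ² \ ℚ², k ≥ 0, and let B_k ≥ 2 be the smallest positive integer B such that there exists A ∈ ℤ² with |γ − A/B| < 2^{-k}. Let b_k be the smallest positive integer b with 1 ≤ b < B_k such that ‖bγ‖ ≤ B_k^{-1/2} (which exists by Dirichlet's simultaneous approximation theorem). Then b_k ≤ 2^k / B_k^{1/2}. -/
lemma abs_sub_round_mul_div (x : ℝ) {b : ℝ} (hb : 0 < b) :
    |x - round (b * x) / b| = |b * x - round (b * x)| / b := by
  rw [← abs_of_pos hb, ← abs_div, abs_of_pos hb, sub_div, mul_div_cancel_left₀ x hb.ne']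

lemma abs_sub_round_mul_div_lt {x b ε : ℝ} (hb : 0 < b) (h : |b * x - round (b * x)| < b * ε) :
    |x - round (b * x) / b| < ε := by
  rw [abs_sub_round_mul_div x hb, div_lt_iff₀ hb, mul_comm ε]
  exact h

lemma exists_approx_of_nint2_lt {γ : ℝ × ℝ} {b ε : ℝ} (hb : 0 < b)
    (h : nint2 (b * γ.1, b * γ.2) < b * ε) :
    ∃ A : ℤ × ℤ, max |γ.1 - (A.1 : ℝ) / b| |γ.2 - (A.2 : ℝ) / b| < ε :=
  ⟨(round (b * γ.1), round (b * γ.2)),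
    max_lt (abs_sub_round_mul_div_lt hb ((le_max_left _ _).trans_lt h))
      (abs_sub_round_mul_div_lt hb ((le_max_right _ _).trans_lt h))⟩

theorem bk_bound_general (γ : ℝ × ℝ)
    (k : ℕ) (Bk bk : ℕ)
    (hBk : IsLeast {B : ℕ | 0 < B ∧ ∃ A : ℤ × ℤ,
      max |γ.1 - (A.1 : ℝ) / B| |γ.2 - (A.2 : ℝ) / B| < (2 : ℝ) ^ (-(k : ℤ))} Bk)
    (hbk : IsLeast {b : ℕ | 1 ≤ b ∧ b < Bk ∧
      nint2 ((b : ℝ) * γ.1, (b : ℝ) * γ.2) ≤ (Bk : ℝ) ^ (-(1 / 2 : ℝ))} bk) :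
    (bk : ℝ) ≤ 2 ^ k / Real.sqrt Bk := by
  obtain ⟨⟨hbk_pos, hbk_lt, hbk_nint⟩, -⟩ := hbk
  by_contra! hlarge
  have hb : (0 : ℝ) < bk := by exact_mod_cast hbk_pos
  have hnint : nint2 ((bk : ℝ) * γ.1, (bk : ℝ) * γ.2) < bk * (2 : ℝ) ^ (-(k : ℤ)) := by
    calc nint2 ((bk : ℝ) * γ.1, (bk : ℝ) * γ.2)
        ≤ 1 / Real.sqrt Bk := by
          rwa [Real.rpow_neg (Nat.cast_nonneg _), ← Real.sqrt_eq_rpow, ← one_div] at hbk_nint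
      _ < bk * (2 : ℝ) ^ (-(k : ℤ)) := by
          rwa [zpow_neg, zpow_natCast, ← div_eq_mul_inv, lt_div_iff₀ (by positivity),
            one_div_mul_eq_div]
  have hmem := hBk.2 ⟨hbk_pos, exists_approx_of_nint2_lt hb hnint⟩
  omega

theorem bk_bound (γ : ℝ × ℝ)
    (hγ : ¬ ∃ p : ℚ × ℚ, ((p.1 : ℝ), (p.2 : ℝ)) = γ) (k : ℕ) (Bk bk : ℕ)
    (hBk2 : 2 ≤ Bk)
    (hBk : IsLeast {B : ℕ | 0 < B ∧ ∃ A : ℤ × ℤ,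
      max |γ.1 - (A.1 : ℝ) / B| |γ.2 - (A.2 : ℝ) / B| < (2 : ℝ) ^ (-(k : ℤ))} Bk)
    (hbk : IsLeast {b : ℕ | 1 ≤ b ∧ b < Bk ∧
      nint2 ((b : ℝ) * γ.1, (b : ℝ) * γ.2) ≤ (Bk : ℝ) ^ (-(1 / 2 : ℝ))} bk) :
    (bk : ℝ) ≤ 2 ^ k / Real.sqrt Bk :=
  bk_bound_general γ k Bk bk hBk hbk
end

section
/- Let q > r be positive integers with r not dividing q, g = gcd(q,r), q' = q/g, r' = r/g. Let B be a positive integer, A = (A₁,A₂) ∈ ℤ² with gcd(A₁,A₂,B) = 1, and suppose u = (u₁,u₂) ∈ ℤ², v = (v₁,v₂) ∈ ℤ² satisfy gcd(Bu₁+A₁, Bu₂+A₂, Bq) = 1 and gcd(Bv₁+A₁, Bv₂+A₂, Br) = 1. Then |r'(u + A/B) − q'(v + A/B)| ≥ 1/B, where |·| is the maximum norm on ℝ². -/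
/-!
The integer vector `N = r'(Bu + A) - q'(Bv + A)` equals `B` times the real vector in the claim,
so it suffices that `N ≠ 0`. If `N = 0`, then `r'(Bu + A) = q'(Bv + A)` with `q'` and `r'`
coprime, so `r'` divides both coordinates of `Bv + A` and also `Br`; the gcd condition on `v`
forces `r' = 1`, i.e. `r = gcd(q, r)` divides `q`.
-/

theorem div_gcd_ne_one_of_not_dvd {q r : ℕ} (h : ¬ r ∣ q) : r / Nat.gcd q r ≠ 1 := by
  intro h1
  apply h
  rw [Nat.eq_mul_of_div_eq_right (Nat.gcd_dvd_right q r) h1, mul_one]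
  exact Nat.gcd_dvd_left q r

theorem mul_add_eq_of_abs_sub_lt_one_div {r q B : ℕ} (hB : 0 < B) {x y a : ℤ}
    (h : |(r : ℝ) * (x + a / B) - q * (y + a / B)| < 1 / B) :
    (r : ℤ) * (B * x + a) = q * (B * y + a) := by
  have hB' : (0 : ℝ) < B := by exact_mod_cast hB
  have hscale : (r : ℝ) * (x + a / B) - q * (y + a / B)
      = ((r * (B * x + a) - q * (B * y + a) : ℤ) : ℝ) / B := by
    push_cast
    field_simp
  rw [hscale, abs_div, Nat.abs_cast, div_lt_div_iff_of_pos_right hB'] at h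
  exact sub_eq_zero.mp (Int.abs_lt_one_iff.mp (by exact_mod_cast h))

theorem shift_reduced_separation_general (q r : ℕ) (hr : 0 < r) (hnd : ¬ r ∣ q)
    (q' r' : ℕ) (hq' : q' = q / Nat.gcd q r) (hr' : r' = r / Nat.gcd q r)
    (B : ℕ) (hB : 0 < B) (A : ℤ × ℤ)
    (u v : ℤ × ℤ)
    (hv : Int.gcd (Int.gcd ((B : ℤ) * v.1 + A.1) ((B : ℤ) * v.2 + A.2) : ℤ) ((B : ℤ) * r) = 1) :
    (1 : ℝ) / B ≤
      max |(r' : ℝ) * ((u.1 : ℝ) + (A.1 : ℝ) / B) - (q' : ℝ) * ((v.1 : ℝ) + (A.1 : ℝ) / B)|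
          |(r' : ℝ) * ((u.2 : ℝ) + (A.2 : ℝ) / B) - (q' : ℝ) * ((v.2 : ℝ) + (A.2 : ℝ) / B)| := by
  by_contra! hlt
  obtain ⟨h₁, h₂⟩ := max_lt_iff.mp hlt
  have hcop : IsCoprime (r' : ℤ) q' := by
    rw [Nat.isCoprime_iff_coprime, hq', hr']
    exact (Nat.coprime_div_gcd_div_gcd (Nat.gcd_pos_of_pos_right q hr)).symm
  have hdvd_v {x y a : ℤ} (h : |(r' : ℝ) * (x + a / B) - q' * (y + a / B)| < 1 / B) :
      (r' : ℤ) ∣ B * y + a :=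
    hcop.dvd_of_dvd_mul_left ⟨_, (mul_add_eq_of_abs_sub_lt_one_div hB h).symm⟩
  have hdvd_r : (r' : ℤ) ∣ B * r := by
    rw [hr']
    exact (Int.natCast_dvd_natCast.mpr (Nat.div_dvd_of_dvd (Nat.gcd_dvd_right q r))).mul_left _
  have hdvd_one : (r' : ℤ) ∣ 1 := by
    rw [← Int.ofNat_one, ← hv]
    exact Int.dvd_coe_gcd (Int.dvd_coe_gcd (hdvd_v h₁) (hdvd_v h₂)) hdvd_r
  have hr'_eq_one : r' = 1 := Nat.dvd_one.mp (Int.natCast_dvd_natCast.mp hdvd_one)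
  exact div_gcd_ne_one_of_not_dvd hnd (hr' ▸ hr'_eq_one)

theorem shift_reduced_separation (q r : ℕ) (hr : 0 < r) (hrq : r < q) (hnd : ¬ r ∣ q)
    (q' r' : ℕ) (hq' : q' = q / Nat.gcd q r) (hr' : r' = r / Nat.gcd q r)
    (B : ℕ) (hB : 0 < B) (A : ℤ × ℤ)
    (hA : Int.gcd (Int.gcd A.1 A.2 : ℤ) (B : ℤ) = 1)
    (u v : ℤ × ℤ)
    (hu : Int.gcd (Int.gcd ((B : ℤ) * u.1 + A.1) ((B : ℤ) * u.2 + A.2) : ℤ) ((B : ℤ) * q) = 1)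
    (hv : Int.gcd (Int.gcd ((B : ℤ) * v.1 + A.1) ((B : ℤ) * v.2 + A.2) : ℤ) ((B : ℤ) * r) = 1) :
    (1 : ℝ) / B ≤
      max |(r' : ℝ) * ((u.1 : ℝ) + (A.1 : ℝ) / B) - (q' : ℝ) * ((v.1 : ℝ) + (A.1 : ℝ) / B)|
          |(r' : ℝ) * ((u.2 : ℝ) + (A.2 : ℝ) / B) - (q' : ℝ) * ((v.2 : ℝ) + (A.2 : ℝ) / B)| :=
  shift_reduced_separation_general q r hr hnd q' r' hq' hr' B hB A u v hv
end

section
/- Let γ ∈ ℝ², b a positive integer, a ∈ ℤ² with |γ − a/b| = ‖bγ‖/b, and let q > r be positive integers with g = gcd(q,r), q' = q/g, r' = r/g, h = q' − r'. Suppose u, v ∈ ℤ² satisfy the shift-reduced coprimality conditions gcd(bu + a, bq) = 1 and gcd(bv + a, br) = 1 (componentwise gcd of the vector's entries with the modulus). If |q'(v + γ) − r'(u + γ)| < D for some D > 0, then 1 ≤ D·b + h·‖bγ‖. -/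
/-!
Put `X = b u + a` and `Y = b v + a`. The integer vector `W = q' Y - r' X` is nonzero: otherwise
`q' ∣ r' X` with `q'` coprime to `r'` gives `q' ∣ gcd (X, b q) = 1`, impossible as `0 < r' < q'`.
Coordinatewise, `W = b (q' (v + γ) - r' (u + γ)) - h (b γ - a)`, so a nonzero coordinate gives
`1 ≤ |W_i| ≤ b D + h ‖bγ‖`.
-/

theorem isUnit_of_mul_eq_mul_of_gcd_eq_one {p s x₁ x₂ y₁ y₂ m : ℤ} (hps : IsCoprime p s)
    (h₁ : p * y₁ = s * x₁) (h₂ : p * y₂ = s * x₂) (hpm : p ∣ m)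
    (hx : Int.gcd (Int.gcd x₁ x₂ : ℤ) m = 1) : IsUnit p := by
  have hpx₁ : p ∣ x₁ := hps.dvd_of_dvd_mul_left ⟨y₁, h₁.symm⟩
  have hpx₂ : p ∣ x₂ := hps.dvd_of_dvd_mul_left ⟨y₂, h₂.symm⟩
  have hp1 : p ∣ 1 := by
    simpa [hx] using Int.dvd_coe_gcd (Int.dvd_coe_gcd hpx₁ hpx₂) hpm
  exact isUnit_of_dvd_one hp1

theorem abs_mul_sub_le_of_abs_sub_div_le {b x c ε : ℝ} (hb : 0 < b) (h : |x - c / b| ≤ ε / b) :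
    |b * x - c| ≤ ε := by
  have hfactor : b * x - c = b * (x - c / b) := by field_simp
  rw [hfactor, abs_mul, abs_of_pos hb]
  exact (le_div_iff₀' hb).mp h

theorem one_le_mul_abs_sub_add_abs_sub_mul {b p s x y c : ℤ} {t ε : ℝ}
    (hne : p * (b * y + c) - s * (b * x + c) ≠ 0) (hc : |b * t - c| ≤ ε) :
    1 ≤ |(b : ℝ)| * |p * (y + t) - s * (x + t)| + |(p : ℝ) - s| * ε := by
  have hW : (1 : ℝ) ≤ |((p * (b * y + c) - s * (b * x + c) : ℤ) : ℝ)| := by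
    exact_mod_cast Int.one_le_abs hne
  have hsplit : ((p * (b * y + c) - s * (b * x + c) : ℤ) : ℝ)
      = b * (p * (y + t) - s * (x + t)) - (p - s) * (b * t - c) := by
    push_cast; ring
  calc (1 : ℝ) ≤ |b * (p * (y + t) - s * (x + t)) - (p - s) * (b * t - c)| := hsplit ▸ hW
    _ ≤ |b * (p * (y + t) - s * (x + t))| + |(p - s) * (b * t - c)| := abs_sub _ _
    _ ≤ |(b : ℝ)| * |p * (y + t) - s * (x + t)| + |(p : ℝ) - s| * ε := by
      rw [abs_mul, abs_mul]; gcongr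

theorem shift_reduced_lower_bound_general (γ : ℝ × ℝ) (b : ℕ) (hb : 0 < b) (a : ℤ × ℤ)
    (ha : max |γ.1 - (a.1 : ℝ) / b| |γ.2 - (a.2 : ℝ) / b|
      = nint2 ((b : ℝ) * γ.1, (b : ℝ) * γ.2) / b)
    (q r : ℕ) (hr : 0 < r) (hrq : r < q)
    (q' r' h : ℕ) (hq' : q' = q / Nat.gcd q r) (hr' : r' = r / Nat.gcd q r)
    (hh : h = q' - r')
    (u v : ℤ × ℤ)
    (hu : Int.gcd (Int.gcd ((b : ℤ) * u.1 + a.1) ((b : ℤ) * u.2 + a.2) : ℤ) ((b : ℤ) * q) = 1)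
    (D : ℝ)
    (hclose : max |(q' : ℝ) * ((v.1 : ℝ) + γ.1) - (r' : ℝ) * ((u.1 : ℝ) + γ.1)|
                  |(q' : ℝ) * ((v.2 : ℝ) + γ.2) - (r' : ℝ) * ((u.2 : ℝ) + γ.2)| < D) :
    1 ≤ D * b + (h : ℝ) * nint2 ((b : ℝ) * γ.1, (b : ℝ) * γ.2) := by
  have hg : 0 < Nat.gcd q r := Nat.gcd_pos_of_pos_right q hr
  have hcop : q'.Coprime r' := hq' ▸ hr' ▸ Nat.coprime_div_gcd_div_gcd hg
  have hr'pos : 0 < r' := hr' ▸ Nat.div_pos (Nat.gcd_le_right (m := q) hr) hg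
  have hlt : r' < q' := hq' ▸ hr' ▸ Nat.div_lt_div_of_lt_of_dvd (Nat.gcd_dvd_left q r) hrq
  have hq'dvd : (q' : ℤ) ∣ b * q :=
    Dvd.dvd.mul_left (Int.natCast_dvd_natCast.mpr (hq' ▸ Nat.div_dvd_of_dvd (Nat.gcd_dvd_left q r))) _
  have hW : (q' : ℤ) * (b * v.1 + a.1) - r' * (b * u.1 + a.1) ≠ 0 ∨
      (q' : ℤ) * (b * v.2 + a.2) - r' * (b * u.2 + a.2) ≠ 0 := by
    by_contra! hzero
    have hunit := isUnit_of_mul_eq_mul_of_gcd_eq_one (Nat.Coprime.isCoprime hcop)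
      (sub_eq_zero.mp hzero.1) (sub_eq_zero.mp hzero.2) hq'dvd hu
    rw [Int.ofNat_isUnit, Nat.isUnit_iff] at hunit
    omega
  have hh' : |(q' : ℝ) - r'| = h := by
    rw [hh, Nat.cast_sub hlt.le, abs_of_nonneg (sub_nonneg.mpr (by exact_mod_cast hlt.le))]
  have hbR : (0 : ℝ) < b := by exact_mod_cast hb
  have hclose₁ := (le_max_left _ _).trans_lt hclose
  have hclose₂ := (le_max_right _ _).trans_lt hclose
  rcases hW with hW | hW
  · have key := one_le_mul_abs_sub_add_abs_sub_mul hW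
      (abs_mul_sub_le_of_abs_sub_div_le hbR (ha ▸ le_max_left _ _))
    push_cast at key
    rw [hh', abs_of_pos hbR] at key
    linarith [mul_lt_mul_of_pos_left hclose₁ hbR]
  · have key := one_le_mul_abs_sub_add_abs_sub_mul hW
      (abs_mul_sub_le_of_abs_sub_div_le hbR (ha ▸ le_max_right _ _))
    push_cast at key
    rw [hh', abs_of_pos hbR] at key
    linarith [mul_lt_mul_of_pos_left hclose₂ hbR]

theorem shift_reduced_lower_bound (γ : ℝ × ℝ) (b : ℕ) (hb : 0 < b) (a : ℤ × ℤ)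
    (ha : max |γ.1 - (a.1 : ℝ) / b| |γ.2 - (a.2 : ℝ) / b|
      = nint2 ((b : ℝ) * γ.1, (b : ℝ) * γ.2) / b)
    (q r : ℕ) (hr : 0 < r) (hrq : r < q)
    (q' r' h : ℕ) (hq' : q' = q / Nat.gcd q r) (hr' : r' = r / Nat.gcd q r)
    (hh : h = q' - r')
    (u v : ℤ × ℤ)
    (hu : Int.gcd (Int.gcd ((b : ℤ) * u.1 + a.1) ((b : ℤ) * u.2 + a.2) : ℤ) ((b : ℤ) * q) = 1)
    (hv : Int.gcd (Int.gcd ((b : ℤ) * v.1 + a.1) ((b : ℤ) * v.2 + a.2) : ℤ) ((b : ℤ) * r) = 1)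
    (D : ℝ) (hD : 0 < D)
    (hclose : max |(q' : ℝ) * ((v.1 : ℝ) + γ.1) - (r' : ℝ) * ((u.1 : ℝ) + γ.1)|
                  |(q' : ℝ) * ((v.2 : ℝ) + γ.2) - (r' : ℝ) * ((u.2 : ℝ) + γ.2)| < D) :
    1 ≤ D * b + (h : ℝ) * nint2 ((b : ℝ) * γ.1, (b : ℝ) * γ.2) :=
  shift_reduced_lower_bound_general γ b hb a ha q r hr hrq q' r' h hq' hr' hh u v hu D hclose
end

section
/- Let γ = (γ₁, γ₂) ∈ ℝ² and q a positive integer, and let E_q = ⋃_{u ∈ ℤ²} B((u+γ)/q, ψ(q)/q) ∩ [0,1]² with 0 < ψ(q) ≤ 1/2, where B is a max-norm ball. Then for any axis-parallel square U ⊆ [0,1]² and all sufficiently large q (depending on U), λ(E_q ∩ U) ≥ (1/2) λ(E_q) λ(U). -/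
open MeasureTheory

set_option maxHeartbeats 1000000 in
theorem equidistribution_of_Eq (γ : ℝ × ℝ) (ψ : ℕ → ℝ)
    (hψ : ∀ q, 0 < ψ q ∧ ψ q ≤ 1 / 2)
    (x : ℝ × ℝ) (s : ℝ) (hs : 0 < s)
    (hU : Set.Icc x (x.1 + s, x.2 + s) ⊆ Set.Icc ((0, 0) : ℝ × ℝ) (1, 1)) :
    ∃ q₀ : ℕ, ∀ q ≥ q₀, 0 < q →
      2⁻¹ * volume ((⋃ u : ℤ × ℤ, Metric.ball
          ((((u.1 : ℝ) + γ.1) / q, ((u.2 : ℝ) + γ.2) / q) : ℝ × ℝ) (ψ q / q))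
          ∩ Set.Icc ((0, 0) : ℝ × ℝ) (1, 1))
        * volume (Set.Icc x (x.1 + s, x.2 + s))
      ≤ volume (((⋃ u : ℤ × ℤ, Metric.ball
          ((((u.1 : ℝ) + γ.1) / q, ((u.2 : ℝ) + γ.2) / q) : ℝ × ℝ) (ψ q / q))
          ∩ Set.Icc ((0, 0) : ℝ × ℝ) (1, 1)) ∩ Set.Icc x (x.1 + s, x.2 + s)) := by
  classical
  -- basic facts about the square U
  have hxmem : x ∈ Set.Icc ((0, 0) : ℝ × ℝ) (1, 1) := by
    refine hU ⟨le_refl x, ?_⟩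
    exact Prod.mk_le_mk.mpr ⟨by linarith, by linarith⟩
  have hymem : (x.1 + s, x.2 + s) ∈ Set.Icc ((0, 0) : ℝ × ℝ) (1, 1) := by
    refine hU ⟨?_, le_refl _⟩
    exact Prod.mk_le_mk.mpr ⟨by linarith, by linarith⟩
  have hx1 : 0 ≤ x.1 := hxmem.1.1
  have hx2 : 0 ≤ x.2 := hxmem.1.2
  have hy1 : x.1 + s ≤ 1 := hymem.2.1
  have hy2 : x.2 + s ≤ 1 := hymem.2.2
  have hs1 : s ≤ 1 := by linarith
  refine ⟨⌈(16 : ℝ) / s⌉₊, fun q hq hq0 => ?_⟩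
  have hq0' : (0 : ℝ) < q := by exact_mod_cast hq0
  have hqs : 16 ≤ (q : ℝ) * s := by
    have h1 : (16 : ℝ) / s ≤ (⌈(16 : ℝ) / s⌉₊ : ℝ) := Nat.le_ceil _
    have h2 : ((⌈(16 : ℝ) / s⌉₊ : ℕ) : ℝ) ≤ (q : ℝ) := by exact_mod_cast hq
    have h3 : (16 : ℝ) / s ≤ (q : ℝ) := h1.trans h2
    calc (16 : ℝ) = 16 / s * s := by field_simp
      _ ≤ (q : ℝ) * s := by nlinarith
  set r : ℝ := ψ q / q with hrdef
  have hψ1 := (hψ q).1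
  have hψ2 := (hψ q).2
  have hr : 0 < r := div_pos hψ1 hq0'
  have hqr : (q : ℝ) * r ≤ 1 / 2 := by
    rw [hrdef, mul_div_cancel₀ _ (ne_of_gt hq0')]
    exact hψ2
  set c : ℤ × ℤ → ℝ × ℝ := fun u => (((u.1 : ℝ) + γ.1) / q, ((u.2 : ℝ) + γ.2) / q)
    with hc
  set E : Set (ℝ × ℝ) := ⋃ u : ℤ × ℤ, Metric.ball (c u) r with hE
  set I : Set (ℝ × ℝ) := Set.Icc ((0, 0) : ℝ × ℝ) (1, 1) with hI
  set U : Set (ℝ × ℝ) := Set.Icc x (x.1 + s, x.2 + s) with hUdef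
  show 2⁻¹ * volume (E ∩ I) * volume U ≤ volume ((E ∩ I) ∩ U)
  -- 1D distance fact
  have hdist1 : ∀ (a b : ℤ) (t : ℝ), a ≠ b →
      1 / (q : ℝ) ≤ dist (((a : ℝ) + t) / q) (((b : ℝ) + t) / q) := by
    intro a b t hab
    rw [Real.dist_eq]
    have h1 : ((a : ℝ) + t) / q - ((b : ℝ) + t) / q = ((a : ℝ) - b) / q := by ring
    rw [h1, abs_div, abs_of_pos hq0']
    have h2 : (1 : ℝ) ≤ |(a : ℝ) - b| := by
      have h3 : (1 : ℤ) ≤ |a - b| := Int.one_le_abs (sub_ne_zero.mpr hab)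
      have h4 : ((|a - b| : ℤ) : ℝ) = |(a : ℝ) - b| := by push_cast; ring_nf
      rw [← h4]; exact_mod_cast h3
    gcongr
  -- pairwise disjointness of the balls
  have h2r : r + r ≤ 1 / (q : ℝ) := by
    rw [le_div_iff₀ hq0']; nlinarith
  have hdisj : Pairwise (Function.onFun Disjoint fun u : ℤ × ℤ => Metric.ball (c u) r) := by
    intro u v huv
    refine Metric.ball_disjoint_ball ?_
    rcases (by
      by_contra hcon
      push_neg at hcon
      exact huv (Prod.ext hcon.1 hcon.2) : u.1 ≠ v.1 ∨ u.2 ≠ v.2) with h | h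
    · have := hdist1 u.1 v.1 γ.1 h
      calc r + r ≤ 1 / (q : ℝ) := h2r
        _ ≤ dist (c u).1 (c v).1 := this
        _ ≤ dist (c u) (c v) := by rw [Prod.dist_eq]; exact le_max_left _ _
    · have := hdist1 u.2 v.2 γ.2 h
      calc r + r ≤ 1 / (q : ℝ) := h2r
        _ ≤ dist (c u).2 (c v).2 := this
        _ ≤ dist (c u) (c v) := by rw [Prod.dist_eq]; exact le_max_right _ _
  -- volume of one ball
  have hvol_ball : ∀ p : ℝ × ℝ, volume (Metric.ball p r)
      = ENNReal.ofReal (2 * r) * ENNReal.ofReal (2 * r) := by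
    intro p
    obtain ⟨p1, p2⟩ := p
    rw [← ball_prod_same, Measure.volume_eq_prod, Measure.prod_prod,
      Real.volume_ball, Real.volume_ball]
  ------------------------------------------------------------------
  -- UPPER BOUND on volume (E ∩ I)
  ------------------------------------------------------------------
  set a1 : ℤ := ⌈-γ.1 - 1 / 2⌉ with ha1
  set a2 : ℤ := ⌈-γ.2 - 1 / 2⌉ with ha2
  set F : Finset (ℤ × ℤ) :=
    Finset.Icc a1 (a1 + q + 1) ×ˢ Finset.Icc a2 (a2 + q + 1) with hF
  have hkey1 : ∀ (m : ℤ) (t y : ℝ), |y - ((m : ℝ) + t) / q| < r → 0 ≤ y → y ≤ 1 →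
      ⌈-t - 1 / 2⌉ ≤ m ∧ m ≤ ⌈-t - 1 / 2⌉ + q + 1 := by
    intro m t y hy h0 h1
    have hlow : y - r < ((m : ℝ) + t) / q := by
      have := abs_lt.mp hy; linarith [this.2]
    have hhigh : ((m : ℝ) + t) / q < y + r := by
      have := abs_lt.mp hy; linarith [this.1]
    have hl2 : -(1 / 2 : ℝ) < (m : ℝ) + t := by
      have : -r < ((m : ℝ) + t) / q := by linarith
      have h5 : -r * q < (m : ℝ) + t := by
        rw [← lt_div_iff₀ hq0'] at *; linarith [(neg_lt.mpr (by linarith : -(((m:ℝ)+t)/q) < r))]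
      nlinarith
    have hh2 : (m : ℝ) + t < q + 1 / 2 := by
      have h6 : ((m : ℝ) + t) / q < 1 + r := by linarith
      have h7 : (m : ℝ) + t < (1 + r) * q := by
        rw [div_lt_iff₀ hq0'] at h6; exact h6
      nlinarith
    constructor
    · rw [Int.ceil_le]; push_cast; linarith
    · have h8 : ((m - q - 1 : ℤ) : ℝ) < ((a1 : ℤ) : ℝ) ∨ True := Or.inr trivial
      have h9 : ((m - q - 1 : ℤ) : ℝ) < -t - 1 / 2 + 1 - 1 := by push_cast; linarith
      have h10 : (-t - 1 / 2 : ℝ) ≤ (⌈-t - 1 / 2⌉ : ℝ) := Int.le_ceil _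
      have h11 : ((m - q - 1 : ℤ) : ℝ) < ((⌈-t - 1 / 2⌉ : ℤ) : ℝ) := by
        push_cast at h9 ⊢; linarith
      have h12 : (m - q - 1 : ℤ) < ⌈-t - 1 / 2⌉ := by exact_mod_cast h11
      omega
  have hFsub : E ∩ I ⊆ ⋃ u ∈ F, Metric.ball (c u) r := by
    rintro y ⟨hyE, hyI⟩
    rw [hE, Set.mem_iUnion] at hyE
    obtain ⟨u, hu⟩ := hyE
    rw [Set.mem_iUnion₂]
    refine ⟨u, ?_, hu⟩
    have hd : dist y (c u) < r := hu
    have hd1 : dist y.1 (c u).1 < r := lt_of_le_of_lt (by rw [Prod.dist_eq]; exact le_max_left _ _) hd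
    have hd2 : dist y.2 (c u).2 < r := lt_of_le_of_lt (by rw [Prod.dist_eq]; exact le_max_right _ _) hd
    have hy1' : 0 ≤ y.1 := hyI.1.1
    have hy1'' : y.1 ≤ 1 := hyI.2.1
    have hy2' : 0 ≤ y.2 := hyI.1.2
    have hy2'' : y.2 ≤ 1 := hyI.2.2
    have k1 := hkey1 u.1 γ.1 y.1 (by rw [Real.dist_eq] at hd1; exact hd1) hy1' hy1''
    have k2 := hkey1 u.2 γ.2 y.2 (by rw [Real.dist_eq] at hd2; exact hd2) hy2' hy2''
    rw [hF, Finset.mem_product, Finset.mem_Icc, Finset.mem_Icc]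
    exact ⟨⟨k1.1, k1.2⟩, ⟨k2.1, k2.2⟩⟩
  have hFcard : (F.card : ℝ) = ((q : ℝ) + 2) * ((q : ℝ) + 2) := by
    rw [hF, Finset.card_product, Int.card_Icc, Int.card_Icc]
    have : (a1 + (q : ℤ) + 1 + 1 - a1) = (q : ℤ) + 2 := by ring
    rw [this]
    have : (a2 + (q : ℤ) + 1 + 1 - a2) = (q : ℤ) + 2 := by ring
    rw [this]
    have h2 : ((q : ℤ) + 2).toNat = q + 2 := by omega
    rw [h2]; push_cast; ring
  have hupper : volume (E ∩ I) ≤ (F.card : ENNReal) * (ENNReal.ofReal (2 * r) * ENNReal.ofReal (2 * r)) := by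
    calc volume (E ∩ I) ≤ volume (⋃ u ∈ F, Metric.ball (c u) r) := measure_mono hFsub
      _ ≤ ∑ u ∈ F, volume (Metric.ball (c u) r) := measure_biUnion_finset_le F _
      _ = (F.card : ENNReal) * (ENNReal.ofReal (2 * r) * ENNReal.ofReal (2 * r)) := by
          simp only [hvol_ball, Finset.sum_const, nsmul_eq_mul]
  ------------------------------------------------------------------
  -- LOWER BOUND on volume (E ∩ I ∩ U)
  ------------------------------------------------------------------
  set N : ℤ := ⌊(q : ℝ) * s⌋ - 1 with hNdef
  have hN1 : (N : ℝ) ≤ (q : ℝ) * s - 1 := by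
    have := Int.floor_le ((q : ℝ) * s); push_cast [hNdef]; linarith
  have hN2 : (q : ℝ) * s - 2 ≤ (N : ℝ) := by
    have := Int.lt_floor_add_one ((q : ℝ) * s); push_cast [hNdef]; linarith
  have hNpos : 0 ≤ N := by
    have : (0 : ℝ) ≤ (N : ℝ) := by linarith
    exact_mod_cast this
  set m1 : ℤ := ⌈(q : ℝ) * x.1 + (q : ℝ) * r - γ.1⌉ with hm1
  set m2 : ℤ := ⌈(q : ℝ) * x.2 + (q : ℝ) * r - γ.2⌉ with hm2
  set G : Finset (ℤ × ℤ) :=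
    Finset.Icc m1 (m1 + N - 1) ×ˢ Finset.Icc m2 (m2 + N - 1) with hG
  have hkey2 : ∀ (m u : ℤ) (t w : ℝ), m = ⌈(q : ℝ) * w + (q : ℝ) * r - t⌉ →
      m ≤ u → u ≤ m + N - 1 →
      Metric.ball (((u : ℝ) + t) / q) r ⊆ Set.Icc w (w + s) := by
    intro m u t w hm hmu hum
    have hmge : (q : ℝ) * w + (q : ℝ) * r - t ≤ (m : ℝ) := by rw [hm]; exact Int.le_ceil _
    have hmlt : (m : ℝ) < (q : ℝ) * w + (q : ℝ) * r - t + 1 := by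
      rw [hm]; exact Int.ceil_lt_add_one _
    have hmu' : (m : ℝ) ≤ (u : ℝ) := by exact_mod_cast hmu
    have hum' : (u : ℝ) ≤ (m : ℝ) + (N : ℝ) - 1 := by
      have : ((u : ℤ) : ℝ) ≤ ((m + N - 1 : ℤ) : ℝ) := by exact_mod_cast hum
      push_cast at this; linarith
    have hlow : w + r ≤ ((u : ℝ) + t) / q := by
      rw [le_div_iff₀ hq0']
      have h1 : (w + r) * q = (q : ℝ) * w + (q : ℝ) * r := by ring
      rw [h1]; linarith
    have hhigh : ((u : ℝ) + t) / q ≤ w + s - r := by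
      rw [div_le_iff₀ hq0']
      have h1 : (w + s - r) * q = (q : ℝ) * w + (q : ℝ) * s - (q : ℝ) * r := by ring
      rw [h1]; linarith [hN1, hqr]
    intro y hy
    rw [Real.ball_eq_Ioo] at hy
    exact ⟨by linarith [hy.1], by linarith [hy.2]⟩
  have hGsub : ∀ u ∈ G, Metric.ball (c u) r ⊆ (E ∩ I) ∩ U := by
    intro u huG
    rw [hG, Finset.mem_product, Finset.mem_Icc, Finset.mem_Icc] at huG
    have hsub1 := hkey2 m1 u.1 γ.1 x.1 hm1 huG.1.1 huG.1.2
    have hsub2 := hkey2 m2 u.2 γ.2 x.2 hm2 huG.2.1 huG.2.2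
    have hballU : Metric.ball (c u) r ⊆ U := by
      rw [hUdef, Set.Icc_prod_eq]
      intro y hy
      rw [hc] at hy
      rw [← ball_prod_same] at hy
      exact ⟨hsub1 hy.1, hsub2 hy.2⟩
    have hballE : Metric.ball (c u) r ⊆ E := by
      rw [hE]; exact fun y hy => Set.mem_iUnion.mpr ⟨u, hy⟩
    have hUI : U ⊆ I := hU
    exact fun y hy => ⟨⟨hballE hy, hUI (hballU hy)⟩, hballU hy⟩
  have hGcard : (G.card : ℝ) = (N : ℝ) * (N : ℝ) := by
    rw [hG, Finset.card_product, Int.card_Icc, Int.card_Icc]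
    have e1 : (m1 + N - 1 + 1 - m1) = N := by ring
    have e2 : (m2 + N - 1 + 1 - m2) = N := by ring
    rw [e1, e2, Nat.cast_mul]
    have e3 : ((N.toNat : ℕ) : ℝ) = (N : ℝ) := by exact_mod_cast Int.toNat_of_nonneg hNpos
    rw [e3]
  have hlower : (G.card : ENNReal) * (ENNReal.ofReal (2 * r) * ENNReal.ofReal (2 * r))
      ≤ volume ((E ∩ I) ∩ U) := by
    have hdisjG : (G : Set (ℤ × ℤ)).PairwiseDisjoint fun u => Metric.ball (c u) r :=
      fun u _ v _ huv => hdisj huv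
    calc (G.card : ENNReal) * (ENNReal.ofReal (2 * r) * ENNReal.ofReal (2 * r))
        = ∑ u ∈ G, volume (Metric.ball (c u) r) := by
          simp only [hvol_ball, Finset.sum_const, nsmul_eq_mul]
      _ = volume (⋃ u ∈ G, Metric.ball (c u) r) := by
          rw [measure_biUnion_finset hdisjG (fun _ _ => measurableSet_ball)]
      _ ≤ volume ((E ∩ I) ∩ U) := by
          refine measure_mono ?_
          exact Set.iUnion₂_subset hGsub
  ------------------------------------------------------------------
  -- volume of U
  ------------------------------------------------------------------
  have hvolU : volume U = ENNReal.ofReal s * ENNReal.ofReal s := by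
    rw [hUdef, Set.Icc_prod_eq, Measure.volume_eq_prod, Measure.prod_prod,
      Real.volume_Icc, Real.volume_Icc]
    norm_num
  ------------------------------------------------------------------
  -- putting everything together
  ------------------------------------------------------------------
  have hmain : 2⁻¹ * ((F.card : ENNReal) * (ENNReal.ofReal (2 * r) * ENNReal.ofReal (2 * r)))
      * (ENNReal.ofReal s * ENNReal.ofReal s)
      ≤ (G.card : ENNReal) * (ENNReal.ofReal (2 * r) * ENNReal.ofReal (2 * r)) := by
    have h2inv : (2⁻¹ : ENNReal) = ENNReal.ofReal 2⁻¹ := by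
      rw [ENNReal.ofReal_inv_of_pos (by norm_num)]
      norm_num
    have hcast1 : (F.card : ENNReal) = ENNReal.ofReal (F.card : ℝ) := by
      rw [ENNReal.ofReal_natCast]
    have hcast2 : (G.card : ENNReal) = ENNReal.ofReal (G.card : ℝ) := by
      rw [ENNReal.ofReal_natCast]
    have hFC : (0 : ℝ) ≤ (F.card : ℝ) := Nat.cast_nonneg _
    have hGC : (0 : ℝ) ≤ (G.card : ℝ) := Nat.cast_nonneg _
    have hA0 : (0 : ℝ) ≤ 2 * r := by linarith
    have hs0 : (0 : ℝ) ≤ s := hs.le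
    have hh1 : (0 : ℝ) ≤ (2 : ℝ)⁻¹ := by norm_num
    have hh2 : (0 : ℝ) ≤ 2⁻¹ * ((F.card : ℝ) * (2 * r * (2 * r))) :=
      mul_nonneg hh1 (mul_nonneg hFC (mul_nonneg hA0 hA0))
    rw [h2inv, hcast1, hcast2,
      ← ENNReal.ofReal_mul hA0, ← ENNReal.ofReal_mul hFC,
      ← ENNReal.ofReal_mul hh1, ← ENNReal.ofReal_mul hs0,
      ← ENNReal.ofReal_mul hh2, ← ENNReal.ofReal_mul hGC]
    refine ENNReal.ofReal_le_ofReal ?_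
    rw [hFcard, hGcard]
    have hqs0 : (0 : ℝ) ≤ (q : ℝ) * s := by linarith
    have hcore : 2⁻¹ * (((q : ℝ) + 2) * ((q : ℝ) + 2)) * (s * s) ≤ (N : ℝ) * (N : ℝ) := by
      nlinarith [hqs, hs1, hN2, hs.le, hq0'.le, sq_nonneg ((q : ℝ) * s - 2),
        mul_le_mul_of_nonneg_left hqs hqs0]
    have hAA : (0 : ℝ) ≤ (2 * r) * (2 * r) := mul_nonneg hA0 hA0
    nlinarith [mul_le_mul_of_nonneg_right hcore hAA]
  calc 2⁻¹ * volume (E ∩ I) * volume U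
      ≤ 2⁻¹ * ((F.card : ENNReal) * (ENNReal.ofReal (2 * r) * ENNReal.ofReal (2 * r)))
        * (ENNReal.ofReal s * ENNReal.ofReal s) := by
        rw [hvolU]; gcongr
    _ ≤ (G.card : ENNReal) * (ENNReal.ofReal (2 * r) * ENNReal.ofReal (2 * r)) := hmain
    _ ≤ volume ((E ∩ I) ∩ U) := hlower
end
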